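/- (Key estimate for the N^{−1/2} discretization rate.) With ρ₀, particles x_i chosen so ∫_{x_{i−1}}^{x_i} ρ₀ = 1/N, lengths l_i = x_i − x_{i−1}, local variations v_i = TV_{(x_{i−1},x_i)}(ρ₀), and ρ̄^N the associated piecewise constant density, for each i one has ‖ρ̄^N − ρ₀‖_{L¹([x_{i−1},x_i])} ≤ min{l_i v_i, 2/N}, and summing, ‖ρ̄^N − ρ₀‖_{L¹(ℝ)} ≤ Σ_i √(2/N) √(l_i v_i) ≤ √(2/N) · (Σ_i l_i + Σ_i v_i)/2 ≤ (2S₀ + B₀)/√(2N). -/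

import Mathlib

/-!
On the `i`-th cell `(x_{i-1}, x_i)` the density `ρ̄^N` equals the mean of `ρ₀` over the cell.
A mean lies within the oscillation `v_i` of every value of `ρ₀` on the cell, which gives the
bound `l_i v_i`, while `|mean - ρ₀| ≤ mean + ρ₀` integrates to `2/N`. Off the cells `ρ̄^N`
vanishes and `ρ₀` carries no mass, so the global `L¹` error is the sum of the cell errors.
Then `min {a, b} ≤ √a √b` and AM-GM bound it by `√(2/N) (Σ l_i + Σ v_i) / 2`, where
`Σ l_i = x_N - x_0 ≤ 2 S₀` telescopes and `Σ v_i ≤ TV(ρ₀) ≤ B₀` because variation is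
superadditive over consecutive intervals.
-/

open MeasureTheory

/-- Piecewise constant density associated to sorted particles. -/
noncomputable def pcDensity (N : ℕ) (x : Fin (N + 1) → ℝ) : ℝ → ℝ :=
  fun y => ∑ i : Fin N, Set.indicator (Set.Ioo (x i.castSucc) (x i.succ))
    (fun _ => 1 / (N * (x i.succ - x i.castSucc))) y

open Set Function

section Average

variable {α : Type*} [MeasurableSpace α] {μ : Measure α} {s : Set α} {f : α → ℝ}

theorem setIntegral_abs_setAverage_sub_le_mul (hs : MeasurableSet s) (hμs : μ s ≠ ⊤)
    (hf : IntegrableOn f s μ) {V : ℝ} (hosc : ∀ y ∈ s, ∀ z ∈ s, |f z - f y| ≤ V) :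
    ∫ y in s, |⨍ z in s, f z ∂μ - f y| ∂μ ≤ μ.real s * V := by
  rcases eq_or_ne (μ s) 0 with h0 | h0
  · simp [setIntegral_measure_zero _ h0, measureReal_def, h0]
  have hpt : ∀ y ∈ s, ‖|⨍ z in s, f z ∂μ - f y|‖ ≤ V := fun y hy => by
    have := (convex_closedBall (f y) V).set_average_mem Metric.isClosed_closedBall h0 hμs
      ((ae_restrict_iff' hs).2 (ae_of_all _ fun z hz => (Real.dist_eq _ _ ▸ hosc y hy z hz :)))
      hf
    rwa [norm_abs_eq_norm, Real.norm_eq_abs, ← Real.dist_eq, ← Metric.mem_closedBall]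
  calc ∫ y in s, |⨍ z in s, f z ∂μ - f y| ∂μ ≤ ‖∫ y in s, |⨍ z in s, f z ∂μ - f y| ∂μ‖ :=
        Real.le_norm_self _
    _ ≤ V * μ.real s := norm_setIntegral_le_of_norm_le_const hμs.lt_top hpt
    _ = μ.real s * V := mul_comm _ _

theorem setIntegral_abs_setAverage_sub_le_two_mul (hs : MeasurableSet s) (hμs : μ s ≠ ⊤)
    (hf : IntegrableOn f s μ) (hf₀ : ∀ y ∈ s, 0 ≤ f y) :
    ∫ y in s, |⨍ z in s, f z ∂μ - f y| ∂μ ≤ 2 * ∫ y in s, f y ∂μ := by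
  have hc : 0 ≤ ⨍ z in s, f z ∂μ := by
    rw [setAverage_eq, smul_eq_mul]
    exact mul_nonneg (inv_nonneg.2 measureReal_nonneg) (setIntegral_nonneg hs hf₀)
  set c := ⨍ z in s, f z ∂μ
  have hconst : IntegrableOn (fun _ => c) s μ := integrableOn_const hμs
  calc ∫ y in s, |c - f y| ∂μ ≤ ∫ y in s, (c + f y) ∂μ :=
        setIntegral_mono_on (hconst.sub hf).abs (hconst.add hf) hs fun y hy =>
          abs_le.2 ⟨by linarith [hf₀ y hy], by linarith [hf₀ y hy]⟩
    _ = μ.real s • c + ∫ y in s, f y ∂μ := by rw [integral_add hconst hf, setIntegral_const]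
    _ = 2 * ∫ y in s, f y ∂μ := by rw [measure_smul_setAverage _ hμs]; ring

theorem integral_abs_sub_eq_setIntegral {g : α → ℝ} {U : Set α} (hU : MeasurableSet U)
    (hf : Integrable f μ) (hg : Integrable g μ) (hf₀ : ∀ y, 0 ≤ f y)
    (hgU : ∀ y ∉ U, g y = 0) (hmass : ∫ y in U, f y ∂μ = ∫ y, f y ∂μ) :
    ∫ y, |g y - f y| ∂μ = ∫ y in U, |g y - f y| ∂μ := by
  have hcompl : ∫ y in Uᶜ, |g y - f y| ∂μ = ∫ y in Uᶜ, f y ∂μ :=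
    setIntegral_congr_fun hU.compl fun y hy => by
      rw [hgU y hy, zero_sub, abs_neg, abs_of_nonneg (hf₀ y)]
  have hfU := integral_add_compl hU hf
  have hint : Integrable (fun y => |g y - f y|) μ := (hg.sub hf).abs
  rw [← integral_add_compl hU hint, hcompl]
  linarith

end Average

theorem Real.min_le_sqrt_mul_sqrt {a b : ℝ} (ha : 0 ≤ a) (hb : 0 ≤ b) :
    min a b ≤ √a * √b := by
  rw [← Real.sqrt_mul ha, ← Real.sqrt_mul_self (le_min ha hb)]
  exact Real.sqrt_le_sqrt (mul_le_mul (min_le_left a b) (min_le_right a b) (le_min ha hb) ha)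

theorem Real.sqrt_two_div_mul_div_two {n : ℝ} (hn : 0 < n) (c : ℝ) :
    √(2 / n) * c / 2 = c / √(2 * n) := by
  rw [Real.sqrt_div' _ hn.le, Real.sqrt_mul' _ hn.le]
  have h2 : √2 * √2 = (2 : ℝ) := Real.mul_self_sqrt zero_le_two
  have hn' : 0 < √n := Real.sqrt_pos.2 hn
  field_simp
  linear_combination c * h2

theorem Real.sqrt_mul_le_add_div_two {a b : ℝ} (ha : 0 ≤ a) (hb : 0 ≤ b) :
    √(a * b) ≤ (a + b) / 2 := by
  rw [Real.sqrt_mul ha]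
  nlinarith [two_mul_le_add_sq √a √b, Real.sq_sqrt ha, Real.sq_sqrt hb]

theorem Fin.sum_succ_sub_castSucc {M : Type*} [AddCommGroup M] {N : ℕ} (x : Fin (N + 1) → M) :
    ∑ i : Fin N, (x i.succ - x i.castSucc) = x (Fin.last N) - x 0 := by
  have hsucc := Fin.sum_univ_succ x
  have hcast := Fin.sum_univ_castSucc x
  rw [Finset.sum_sub_distrib]
  grind

theorem Monotone.sum_eVariationOn_Ioo_le {α E : Type*} [LinearOrder α] [PseudoEMetricSpace E]
    (f : α → E) : ∀ {N : ℕ} {x : Fin (N + 1) → α}, Monotone x →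
    ∑ i : Fin N, eVariationOn f (Ioo (x i.castSucc) (x i.succ))
      ≤ eVariationOn f (Icc (x 0) (x (Fin.last N)))
  | 0, _, _ => by simp
  | N + 1, x, hx => by
    rw [Fin.sum_univ_castSucc]
    calc _ ≤ eVariationOn f (Icc (x 0) (x (Fin.last N).castSucc))
          + eVariationOn f (Ioo (x (Fin.last N).castSucc) (x (Fin.last (N + 1)))) :=
          add_le_add_left ((hx.comp Fin.strictMono_castSucc.monotone).sum_eVariationOn_Ioo_le f) _
      _ ≤ eVariationOn f (Icc (x 0) (x (Fin.last N).castSucc)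
            ∪ Ioo (x (Fin.last N).castSucc) (x (Fin.last (N + 1)))) :=
          eVariationOn.add_le_union f fun _ hy _ hz => hy.2.trans hz.1.le
      _ ≤ eVariationOn f (Icc (x 0) (x (Fin.last (N + 1)))) := by
          refine eVariationOn.mono f (union_subset ?_ ?_)
          · exact Icc_subset_Icc le_rfl (hx (Fin.le_last _))
          · exact Ioo_subset_Icc_self.trans (Icc_subset_Icc (hx (Fin.zero_le _)) le_rfl)

theorem Monotone.pairwise_disjoint_on_Ioo_castSucc_succ {α : Type*} [Preorder α] {N : ℕ}
    {x : Fin (N + 1) → α} (hx : Monotone x) :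
    Pairwise (Disjoint on fun i : Fin N => Ioo (x i.castSucc) (x i.succ)) :=
  (pairwise_disjoint_on _).2 fun _ _ hij => Set.disjoint_left.2 fun _ hi hj =>
    (hi.2.trans_le (hx (Fin.succ_le_castSucc_iff.2 hij))).not_gt hj.1

section Piecewise

variable {N : ℕ} {x : Fin (N + 1) → ℝ}

theorem pcDensity_eq_of_mem (hx : Monotone x) {i : Fin N} {y : ℝ}
    (hy : y ∈ Ioo (x i.castSucc) (x i.succ)) :
    pcDensity N x y = 1 / (N * (x i.succ - x i.castSucc)) := by
  rw [pcDensity, Finset.sum_eq_single i (fun j _ hji => indicator_of_notMem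
    (disjoint_left.1 (hx.pairwise_disjoint_on_Ioo_castSucc_succ hji) · hy) _)
    (absurd (Finset.mem_univ i)), indicator_of_mem hy]

theorem pcDensity_eq_zero_of_notMem {y : ℝ}
    (hy : y ∉ ⋃ i : Fin N, Ioo (x i.castSucc) (x i.succ)) : pcDensity N x y = 0 :=
  Finset.sum_eq_zero fun i _ => indicator_of_notMem (fun hi => hy (mem_iUnion_of_mem i hi)) _

theorem integrable_pcDensity : Integrable (pcDensity N x) :=
  integrable_finsetSum _ fun _ _ =>
    (integrable_indicator_iff measurableSet_Ioo).2 (integrableOn_const measure_Ioo_lt_top.ne)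

theorem pcDensity_eq_setAverage (hx : StrictMono x) {ρ : ℝ → ℝ} {i : Fin N}
    (hmass : ∫ y in Ioo (x i.castSucc) (x i.succ), ρ y = 1 / N) {y : ℝ}
    (hy : y ∈ Ioo (x i.castSucc) (x i.succ)) :
    pcDensity N x y = ⨍ z in Ioo (x i.castSucc) (x i.succ), ρ z := by
  have hab : x i.castSucc < x i.succ := hx Fin.castSucc_lt_succ
  rw [pcDensity_eq_of_mem hx.monotone hy, setAverage_eq, hmass, Real.volume_real_Ioo_of_le hab.le,
    smul_eq_mul]
  field_simp

theorem setIntegral_Ioo_abs_pcDensity_sub_le (hx : StrictMono x) {ρ : ℝ → ℝ} {i : Fin N}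
    (hρ : IntegrableOn ρ (Ioo (x i.castSucc) (x i.succ))) (hρ₀ : ∀ y, 0 ≤ ρ y)
    (hbv : BoundedVariationOn ρ (Ioo (x i.castSucc) (x i.succ)))
    (hmass : ∫ y in Ioo (x i.castSucc) (x i.succ), ρ y = 1 / N) :
    ∫ y in Ioo (x i.castSucc) (x i.succ), |pcDensity N x y - ρ y|
      ≤ min ((x i.succ - x i.castSucc) * (eVariationOn ρ (Ioo (x i.castSucc) (x i.succ))).toReal)
        (2 / N) := by
  have hab : x i.castSucc < x i.succ := hx Fin.castSucc_lt_succ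
  rw [setIntegral_congr_fun measurableSet_Ioo fun y hy => by
    rw [pcDensity_eq_setAverage hx hmass hy]]
  refine le_min ?_ ?_
  · rw [← Real.volume_real_Ioo_of_le hab.le]
    exact setIntegral_abs_setAverage_sub_le_mul measurableSet_Ioo measure_Ioo_lt_top.ne hρ
      fun y hy z hz => Real.dist_eq (ρ z) (ρ y) ▸ hbv.dist_le hz hy
  · rw [div_eq_mul_one_div 2, ← hmass]
    exact setIntegral_abs_setAverage_sub_le_two_mul measurableSet_Ioo measure_Ioo_lt_top.ne hρ
      fun y _ => hρ₀ y

theorem integral_abs_pcDensity_sub_eq_sum (hx : Monotone x) {ρ : ℝ → ℝ} (hρ : Integrable ρ) (hρ₀ : ∀ y, 0 ≤ ρ y)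
    (hmass : ∑ i : Fin N, ∫ y in Ioo (x i.castSucc) (x i.succ), ρ y = ∫ y, ρ y) :
    ∫ y, |pcDensity N x y - ρ y| =
      ∑ i : Fin N, ∫ y in Ioo (x i.castSucc) (x i.succ), |pcDensity N x y - ρ y| := by
  have hdisj := hx.pairwise_disjoint_on_Ioo_castSucc_succ
  have hint : Integrable (fun y => |pcDensity N x y - ρ y|) := (integrable_pcDensity.sub hρ).abs
  rw [integral_abs_sub_eq_setIntegral (MeasurableSet.iUnion fun _ => measurableSet_Ioo) hρ
      integrable_pcDensity hρ₀ (fun _ => pcDensity_eq_zero_of_notMem),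
    integral_iUnion_fintype (fun _ => measurableSet_Ioo) hdisj
      fun _ => hint.integrableOn]
  rwa [integral_iUnion_fintype (fun _ => measurableSet_Ioo) hdisj fun _ => hρ.integrableOn]

end Piecewise

theorem stmt_13_general
    (ρ₀ : ℝ → ℝ) (hρ₀_nonneg : ∀ y, 0 ≤ ρ₀ y)
    (hρ₀_prob : ∫ y, ρ₀ y = 1)
    (S₀ B₀ : ℝ) (hB₀ : 0 < B₀)
    (hρ₀_tv : eVariationOn ρ₀ Set.univ ≤ ENNReal.ofReal B₀)
    (N : ℕ) (hN : 0 < N)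
    (x : Fin (N + 1) → ℝ) (hx : StrictMono x)
    (hx_range : ∀ i, x i ∈ Set.Icc (-S₀) S₀)
    (hx_mass : ∀ i : Fin N, ∫ y in x i.castSucc..x i.succ, ρ₀ y = 1 / N)
    (l v : Fin N → ℝ)
    (hl : l = fun i => x i.succ - x i.castSucc)
    (hv : v = fun i => (eVariationOn ρ₀ (Set.Ioo (x i.castSucc) (x i.succ))).toReal) :
    (∀ i : Fin N, ∫ y in Set.Icc (x i.castSucc) (x i.succ),
        |pcDensity N x y - ρ₀ y| ≤ min (l i * v i) (2 / N)) ∧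
    (∫ y, |pcDensity N x y - ρ₀ y|
        ≤ ∑ i : Fin N, Real.sqrt (2 / N) * Real.sqrt (l i * v i)) ∧
    (∑ i : Fin N, Real.sqrt (2 / N) * Real.sqrt (l i * v i)
        ≤ Real.sqrt (2 / N) * ((∑ i : Fin N, l i) + ∑ i : Fin N, v i) / 2) ∧
    (∫ y, |pcDensity N x y - ρ₀ y| ≤ (2 * S₀ + B₀) / Real.sqrt (2 * N)) := by
  -- the Bochner integral of a non-integrable function is 0
  have hρ₀_int : Integrable ρ₀ := .of_integral_ne_zero (by simp [hρ₀_prob])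
  have hbv (s : Set ℝ) : BoundedVariationOn ρ₀ s :=
    ne_top_of_le_ne_top ENNReal.ofReal_ne_top ((eVariationOn.mono ρ₀ (subset_univ s)).trans hρ₀_tv)
  have hmass (i : Fin N) : ∫ y in Ioo (x i.castSucc) (x i.succ), ρ₀ y = 1 / N := by
    rw [← integral_Ioc_eq_integral_Ioo,
      ← intervalIntegral.integral_of_le (hx Fin.castSucc_lt_succ).le, hx_mass]
  have hl₀ (i : Fin N) : 0 ≤ l i := hl ▸ sub_nonneg.2 (hx Fin.castSucc_lt_succ).le
  have hv₀ (i : Fin N) : 0 ≤ v i := hv ▸ ENNReal.toReal_nonneg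
  have hlocal (i : Fin N) : ∫ y in Ioo (x i.castSucc) (x i.succ), |pcDensity N x y - ρ₀ y|
      ≤ min (l i * v i) (2 / N) := hl ▸ hv ▸
    setIntegral_Ioo_abs_pcDensity_sub_le hx hρ₀_int.integrableOn hρ₀_nonneg (hbv _) (hmass i)
  have hglobal : ∫ y, |pcDensity N x y - ρ₀ y| ≤ ∑ i, √(2 / N) * √(l i * v i) := by
    rw [integral_abs_pcDensity_sub_eq_sum hx.monotone hρ₀_int hρ₀_nonneg
      (by simp [hmass, hρ₀_prob, hN.ne'])]
    gcongr with i
    exact (hlocal i).trans ((min_comm _ _).trans_le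
      (Real.min_le_sqrt_mul_sqrt (by positivity) (mul_nonneg (hl₀ i) (hv₀ i))))
  have hamgm : ∑ i, √(2 / N) * √(l i * v i) ≤ √(2 / N) * ((∑ i, l i) + ∑ i, v i) / 2 := by
    rw [mul_div_assoc, ← Finset.sum_add_distrib, Finset.sum_div, Finset.mul_sum]
    gcongr with i
    exact Real.sqrt_mul_le_add_div_two (hl₀ i) (hv₀ i)
  have hsum_l : ∑ i, l i ≤ 2 * S₀ := by
    rw [hl, Fin.sum_succ_sub_castSucc]
    linarith [(hx_range (Fin.last N)).2, (hx_range 0).1]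
  have hsum_v : ∑ i, v i ≤ B₀ := by
    rw [hv, ← ENNReal.toReal_sum fun i _ => hbv _]
    exact ENNReal.toReal_le_of_le_ofReal hB₀.le ((hx.monotone.sum_eVariationOn_Ioo_le ρ₀).trans
      ((eVariationOn.mono ρ₀ (subset_univ _)).trans hρ₀_tv))
  refine ⟨fun i => by rw [integral_Icc_eq_integral_Ioo]; exact hlocal i, hglobal, hamgm, ?_⟩
  calc _ ≤ √(2 / N) * (2 * S₀ + B₀) / 2 := by grw [hglobal, hamgm, hsum_l, hsum_v]
    _ = (2 * S₀ + B₀) / √(2 * N) := Real.sqrt_two_div_mul_div_two (by positivity) _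

/-- Key estimate for the `N^{-1/2}` discretization rate: with equal-mass particles,
on each interval `‖ρ̄^N − ρ₀‖_{L¹} ≤ min{l_i v_i, 2/N}`, and summing,
`‖ρ̄^N − ρ₀‖_{L¹(ℝ)} ≤ Σ_i √(2/N)√(l_i v_i) ≤ √(2/N)(Σl_i + Σv_i)/2 ≤ (2S₀+B₀)/√(2N)`. -/
theorem stmt_13
    (ρ₀ : ℝ → ℝ) (hρ₀_meas : Measurable ρ₀) (hρ₀_nonneg : ∀ y, 0 ≤ ρ₀ y)
    (hρ₀_prob : ∫ y, ρ₀ y = 1)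
    (R₀ S₀ B₀ : ℝ) (hR₀ : 0 < R₀) (hS₀ : 0 < S₀) (hB₀ : 0 < B₀)
    (hρ₀_bd : ∀ y, ρ₀ y ≤ R₀)
    (hρ₀_supp : Function.support ρ₀ ⊆ Set.Icc (-S₀) S₀)
    (hρ₀_tv : eVariationOn ρ₀ Set.univ ≤ ENNReal.ofReal B₀)
    (N : ℕ) (hN : 0 < N)
    (x : Fin (N + 1) → ℝ) (hx : StrictMono x)
    (hx_range : ∀ i, x i ∈ Set.Icc (-S₀) S₀)
    (hx_mass : ∀ i : Fin N, ∫ y in x i.castSucc..x i.succ, ρ₀ y = 1 / N)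
    (l v : Fin N → ℝ)
    (hl : l = fun i => x i.succ - x i.castSucc)
    (hv : v = fun i => (eVariationOn ρ₀ (Set.Ioo (x i.castSucc) (x i.succ))).toReal) :
    (∀ i : Fin N, ∫ y in Set.Icc (x i.castSucc) (x i.succ),
        |pcDensity N x y - ρ₀ y| ≤ min (l i * v i) (2 / N)) ∧
    (∫ y, |pcDensity N x y - ρ₀ y|
        ≤ ∑ i : Fin N, Real.sqrt (2 / N) * Real.sqrt (l i * v i)) ∧
    (∑ i : Fin N, Real.sqrt (2 / N) * Real.sqrt (l i * v i)
        ≤ Real.sqrt (2 / N) * ((∑ i : Fin N, l i) + ∑ i : Fin N, v i) / 2) ∧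
    (∫ y, |pcDensity N x y - ρ₀ y| ≤ (2 * S₀ + B₀) / Real.sqrt (2 * N)) :=
  stmt_13_general ρ₀ hρ₀_nonneg hρ₀_prob S₀ B₀ hB₀ hρ₀_tv N hN x hx hx_range hx_mass l v hl hv
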